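/- Let W be a channel with arbitrary input alphabet 𝒳 and finite output alphabet 𝒴, let n ≥ 1, let 0 < δ ≤ √n · log₂|𝒴|, and let u_1,…,u_N ∈ 𝒳^n satisfy 1 − ½‖W_{u_j} − W_{u_k}‖₁ ≤ 2^{−3δ√n} for all j ≠ k. Then there exists a subset 𝒞 ⊆ {1,…,N} of cardinality |𝒞| ≥ N / ⌈n · log₂|𝒴|⌉ such that for all j ∈ 𝒞, W_{u_j}(𝒯_{u_j}^δ) ≥ 1 − λ₁, and for all j ≠ k ∈ 𝒞, W_{u_j}(𝒯_{u_k}^δ) ≤ λ₂, where λ₁ = 2 · 2^{−δ²/(36·K(|𝒴|))} and λ₂ = 2 · 2^{−δ²/(36·K(|𝒴|))} + 3 · 2^{−δ√n}, with K(d) = (log₂ max{d,3})²; that is, {(u_j, 𝒯_{u_j}^δ) : j ∈ 𝒞} is an (n,|𝒞|,λ₁,λ₂)-DI code for W. -/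

import Mathlib

open Real Filter

namespace DIChannel

variable {X Y : Type*}

/-- `p` is a probability distribution on the finite alphabet `Y`. -/
def IsDist [Fintype Y] (p : Y → ℝ) : Prop := (∀ y, 0 ≤ p y) ∧ ∑ y, p y = 1

/-- Product (memoryless) output distribution `W_{x^n}` on `Y^n`. -/
noncomputable def prodP [Fintype Y] (W : X → Y → ℝ) {n : ℕ} (u : Fin n → X)
    (y : Fin n → Y) : ℝ := ∏ i, W (u i) (y i)

/-- Probability of a set of output words under `W_{x^n}`. -/
noncomputable def probOf [Fintype Y] (W : X → Y → ℝ) {n : ℕ} (u : Fin n → X)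
    (E : Finset (Fin n → Y)) : ℝ := ∑ y ∈ E, prodP W u y

/-- Shannon entropy, base 2. -/
noncomputable def H2 [Fintype Y] (p : Y → ℝ) : ℝ := -∑ y, p y * Real.logb 2 (p y)

/-- `H(W_{x^n}) = ∑ i H(W_{x_i})`. -/
noncomputable def Hn [Fintype Y] (W : X → Y → ℝ) {n : ℕ} (u : Fin n → X) : ℝ :=
  ∑ i, H2 (W (u i))

open scoped Classical in
/-- The entropy conditional typical set `𝒯_{x^n}^δ` (points of zero probability excluded). -/
noncomputable def typSet [Fintype Y] (W : X → Y → ℝ) {n : ℕ} (u : Fin n → X) (δ : ℝ) :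
    Finset (Fin n → Y) :=
  Finset.univ.filter fun y =>
    0 < prodP W u y ∧ |Real.logb 2 (prodP W u y) + Hn W u| ≤ δ * Real.sqrt n

/-- `K(d) = (log₂ max{d,3})²`. -/
noncomputable def Kf (d : ℕ) : ℝ := (Real.logb 2 (max d 3 : ℕ)) ^ 2

/-- Total variation distance `½‖p − q‖₁` between distributions on a finite set. -/
noncomputable def tvd {Z : Type*} [Fintype Z] (p q : Z → ℝ) : ℝ := (∑ z, |p z - q z|) / 2

end DIChannel

open DIChannel

/-!
On its typical set `𝒯_u` a product distribution `W_u` takes values `2 ^ (-H(W_u) ± δ√n)`.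

Concentration is a Chernoff bound: for `|t| < 1` the tilted sum `∑ W_u ^ (1 + t)` factors over
the letters, and the expansion `p ^ (1 + t) ≤ p + t p log p + t²/2 p ^ (1 - |t|) (log p)²` bounds
each factor by `exp (-t H + t² T / 2)`, where `T = 18 (log m)² / log 2` with `m = max |𝒴| 3`
dominates the second moments `∑ p ^ (1 - |t|) (log p)²` for the relevant `t`.

For the cross terms, the code words are sorted by the integer part of their entropy, which lies in
`[0, n log₂ |𝒴|]`; one of the `⌈n log₂ |𝒴|⌉` classes has at least `N / ⌈n log₂ |𝒴|⌉` members.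
Inside a class, `W_u ≤ 2 ^ (1 + 2δ√n) min (W_u, W_v)` on `𝒯_u ∩ 𝒯_v`, and
`∑ min (W_u, W_v) = 1 - ½‖W_u - W_v‖₁ ≤ 2 ^ (-3δ√n)`, while `W_u (𝒯_v \ 𝒯_u) ≤ W_u (𝒯_uᶜ)`.
-/

namespace DIChannel

open Finset

lemma exp_le_one_add_add_sq_mul_exp {x : ℝ} (hx : 0 ≤ x) :
    exp x ≤ 1 + x + x ^ 2 / 2 * exp x := by
  -- `exp x - 1 - x = ∫₀ˣ (exp t - 1) dt` and `exp t - 1 ≤ t * exp t ≤ t * exp x` on `[0, x]`.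
  have hint : ∫ t in (0 : ℝ)..x, (exp t - 1) ≤ ∫ t in (0 : ℝ)..x, t * exp x := by
    refine intervalIntegral.integral_mono_on hx
      ((continuous_exp.sub continuous_const).intervalIntegrable 0 x)
      ((continuous_id.mul continuous_const).intervalIntegrable 0 x) fun t ⟨ht0, htx⟩ => ?_
    have h1 : (1 - t) * exp t ≤ 1 := by
      have := add_one_le_exp (-t)
      rw [exp_neg] at this
      calc (1 - t) * exp t ≤ (exp t)⁻¹ * exp t := by gcongr; linarith
        _ = 1 := inv_mul_cancel₀ (exp_pos t).ne'
    nlinarith [mul_le_mul_of_nonneg_left (exp_le_exp.mpr htx) ht0]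
  rw [intervalIntegral.integral_sub (continuous_exp.intervalIntegrable 0 x)
    intervalIntegrable_const, integral_exp, intervalIntegral.integral_const,
    intervalIntegral.integral_mul_const, integral_id] at hint
  simp only [exp_zero, sub_zero, smul_eq_mul, mul_one] at hint
  linarith

lemma exp_le_one_add_add_sq_mul_exp_abs (x : ℝ) :
    exp x ≤ 1 + x + x ^ 2 / 2 * exp |x| := by
  rcases le_or_gt 0 x with hx | hx
  · rw [abs_of_nonneg hx]
    exact exp_le_one_add_add_sq_mul_exp hx
  · rw [abs_of_neg hx]
    -- `exp x = exp (-x) - 2 sinh (-x) ≤ exp (-x) + 2 x`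
    have hsinh : -x < sinh (-x) := self_lt_sinh_iff.mpr (by linarith)
    rw [sinh_eq, neg_neg] at hsinh
    have := exp_le_one_add_add_sq_mul_exp (neg_nonneg.mpr hx.le)
    nlinarith

lemma rpow_one_add_le {p t : ℝ} (hp0 : 0 ≤ p) (hp1 : p ≤ 1) (ht : |t| < 1) :
    p ^ (1 + t) ≤ p + t * (p * log p) + t ^ 2 / 2 * (p ^ (1 - |t|) * log p ^ 2) := by
  rcases hp0.eq_or_lt with rfl | hp
  · rw [zero_rpow (by linarith [neg_abs_le t])]
    simp
  have hexp : ∀ r, p ^ (1 + r) = p * exp (r * log p) := fun r => by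
    rw [rpow_def_of_pos hp, mul_add, mul_one, exp_add, exp_log hp, mul_comm (log p)]
  have habs : |t * log p| = -(|t| * log p) := by
    rw [abs_mul, abs_of_nonpos (log_nonpos hp0 hp1)]
    ring
  rw [hexp, sub_eq_add_neg, hexp, neg_mul, ← habs]
  have := mul_le_mul_of_nonneg_left (exp_le_one_add_add_sq_mul_exp_abs (t * log p)) hp.le
  linarith [show p * (1 + t * log p + (t * log p) ^ 2 / 2 * exp |t * log p|) =
    p + t * (p * log p) + t ^ 2 / 2 * (p * exp |t * log p| * log p ^ 2) by ring]

lemma log_sq_le_mul_rpow_neg_half {p : ℝ} (hp : 0 < p) (hp1 : p ≤ 1) :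
    log p ^ 2 ≤ 16 * p ^ (-(1 / 2 : ℝ)) := by
  have hlog : -log p ≤ 4 * p ^ (-(1 / 4 : ℝ)) := by
    have := log_le_rpow_div (inv_nonneg.mpr hp.le) (by norm_num : (0 : ℝ) < 1 / 4)
    rwa [log_inv, inv_rpow hp.le, ← rpow_neg hp.le, div_eq_mul_inv, mul_comm,
      show (1 / 4 : ℝ)⁻¹ = 4 by norm_num] at this
  have h0 : 0 ≤ -log p := neg_nonneg.mpr (log_nonpos hp.le hp1)
  calc log p ^ 2 = (-log p) ^ 2 := by ring
    _ ≤ (4 * p ^ (-(1 / 4 : ℝ))) ^ 2 := by gcongr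
    _ = 16 * p ^ (-(1 / 2 : ℝ)) := by
      rw [mul_pow, ← rpow_mul_natCast hp.le]
      norm_num

lemma rpow_one_sub_mul_log_sq_le {p s m : ℝ} (hp0 : 0 ≤ p) (hp1 : p ≤ 1) (hs0 : 0 ≤ s)
    (hs : s ≤ 1 / 2) (hm : 1 ≤ m) :
    p ^ (1 - s) * log p ^ 2 ≤ m ^ (2 * s) * (4 * log m ^ 2 * p + 16 / m) := by
  have hm0 : 0 < m := by linarith
  rcases hp0.eq_or_lt with rfl | hp
  · have : 0 ≤ m ^ (2 * s) * (16 / m) := by positivity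
    simpa using this
  rcases le_or_gt (m ^ (-2 : ℝ)) p with hpm | hpm
  · have hlog : -(2 * log m) ≤ log p := by
      have := log_le_log (by positivity) hpm
      rwa [log_rpow hm0, neg_mul] at this
    have hps : p ^ (-s) ≤ m ^ (2 * s) :=
      calc p ^ (-s) ≤ (m ^ (-2 : ℝ)) ^ (-s) :=
            rpow_le_rpow_of_nonpos (by positivity) hpm (by linarith)
        _ = m ^ (2 * s) := by rw [← rpow_mul hm0.le]; ring_nf
    have hsq : log p ^ 2 ≤ 4 * log m ^ 2 := by nlinarith [log_nonpos hp0 hp1]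
    calc p ^ (1 - s) * log p ^ 2 = p ^ (-s) * (log p ^ 2 * p) := by
          rw [sub_eq_add_neg, rpow_add hp, rpow_one]; ring
      _ ≤ m ^ (2 * s) * (4 * log m ^ 2 * p) := by gcongr
      _ ≤ m ^ (2 * s) * (4 * log m ^ 2 * p + 16 / m) := by
          gcongr; exact le_add_of_nonneg_right (by positivity)
  · have hsmall : p ^ (1 / 2 - s) ≤ m ^ (2 * s) / m :=
      calc p ^ (1 / 2 - s) ≤ (m ^ (-2 : ℝ)) ^ (1 / 2 - s) := rpow_le_rpow hp0 hpm.le (by linarith)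
        _ = m ^ (2 * s) / m := by rw [← rpow_mul hm0.le, ← rpow_sub_one hm0.ne']; ring_nf
    calc p ^ (1 - s) * log p ^ 2 ≤ p ^ (1 - s) * (16 * p ^ (-(1 / 2 : ℝ))) := by
          gcongr; exact log_sq_le_mul_rpow_neg_half hp hp1
      _ = 16 * p ^ (1 / 2 - s) := by rw [mul_left_comm, ← rpow_add hp]; ring_nf
      _ ≤ 16 * (m ^ (2 * s) / m) := by gcongr
      _ = m ^ (2 * s) * (16 / m) := by ring
      _ ≤ m ^ (2 * s) * (4 * log m ^ 2 * p + 16 / m) := by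
          gcongr; exact le_add_of_nonneg_left (by positivity)

lemma le_exp_neg_mul_rpow_of_le_mul_log {q t c : ℝ} (hq : 0 < q) (h : c ≤ t * log q) :
    q ≤ exp (-c) * q ^ (1 + t) := by
  rw [rpow_def_of_pos hq, ← exp_add, show -c + log q * (1 + t) = log q + (t * log q - c) by ring,
    exp_add, exp_log hq]
  exact le_mul_of_one_le_right hq.le (one_le_exp (by linarith))

lemma log_eq_log_two_mul_logb (x : ℝ) : log x = log 2 * logb 2 x := by
  rw [logb, mul_div_cancel₀ _ (log_pos one_lt_two).ne']

lemma one_le_log_three : 1 ≤ log (3 : ℝ) :=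
  ((lt_log_iff_exp_lt (by norm_num)).mpr (exp_one_lt_d9.trans (by norm_num))).le

section Letter

variable {Y : Type*} [Fintype Y] {p : Y → ℝ}

lemma IsDist.le_one (hp : IsDist p) (y : Y) : p y ≤ 1 :=
  hp.2 ▸ single_le_sum (fun i _ => hp.1 i) (mem_univ y)

lemma log_two_mul_H2 (p : Y → ℝ) : log 2 * H2 p = ∑ y, negMulLog (p y) := by
  simp only [H2, negMulLog, mul_neg, mul_sum, neg_mul, sum_neg_distrib, neg_inj]
  refine sum_congr rfl fun y _ => ?_
  rw [logb]
  field_simp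

lemma IsDist.H2_nonneg (hp : IsDist p) : 0 ≤ H2 p :=
  (mul_nonneg_iff_of_pos_left (log_pos one_lt_two)).mp <| log_two_mul_H2 p ▸
    sum_nonneg fun y _ => negMulLog_nonneg (hp.1 y) (hp.le_one y)

lemma IsDist.H2_le_logb_card (hp : IsDist p) : H2 p ≤ logb 2 (Fintype.card Y) := by
  have hd : (0 : ℝ) < Fintype.card Y := by
    rcases isEmpty_or_nonempty Y with hY | hY
    · simpa using hp.2
    · exact_mod_cast Fintype.card_pos
  have hjensen := concaveOn_negMulLog.le_map_sum (t := univ) (w := fun _ => (Fintype.card Y : ℝ)⁻¹)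
    (p := p) (fun _ _ => by positivity) (by simp [hd.ne']) (fun y _ => hp.1 y)
  simp only [smul_eq_mul, ← mul_sum, hp.2, mul_one] at hjensen
  rw [← mul_le_mul_iff_right₀ (log_pos one_lt_two), log_two_mul_H2, logb,
    mul_div_cancel₀ _ (log_pos one_lt_two).ne']
  rw [negMulLog, log_inv] at hjensen
  exact le_of_mul_le_mul_left (hjensen.trans_eq (by ring)) (inv_pos.mpr hd)

lemma IsDist.sum_rpow_one_add_le (hp : IsDist p) {t T : ℝ} (ht : |t| < 1)
    (hT : ∑ y, p y ^ (1 - |t|) * log (p y) ^ 2 ≤ T) :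
    ∑ y, p y ^ (1 + t) ≤ exp (-(t * (log 2 * H2 p)) + t ^ 2 / 2 * T) := by
  have hsum : ∑ y, p y ^ (1 + t)
      ≤ 1 + t * ∑ y, p y * log (p y) + t ^ 2 / 2 * ∑ y, p y ^ (1 - |t|) * log (p y) ^ 2 :=
    calc ∑ y, p y ^ (1 + t)
        ≤ ∑ y, (p y + t * (p y * log (p y)) + t ^ 2 / 2 * (p y ^ (1 - |t|) * log (p y) ^ 2)) :=
          sum_le_sum fun y _ => rpow_one_add_le (hp.1 y) (hp.le_one y) ht
      _ = _ := by rw [sum_add_distrib, sum_add_distrib, hp.2, mul_sum, mul_sum]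
  have hH : log 2 * H2 p = -∑ y, p y * log (p y) := by
    simp only [log_two_mul_H2, negMulLog, neg_mul, sum_neg_distrib]
  rw [hH]
  nlinarith [add_one_le_exp (-(t * -∑ y, p y * log (p y)) + t ^ 2 / 2 * T), sq_nonneg t]

lemma IsDist.sum_rpow_one_sub_mul_log_sq_le (hp : IsDist p) {s m : ℝ} (hs0 : 0 ≤ s)
    (hs : s ≤ 1 / 2) (hm : 1 ≤ m) (hcard : (Fintype.card Y : ℝ) ≤ m) :
    ∑ y, p y ^ (1 - s) * log (p y) ^ 2 ≤ m ^ (2 * s) * (4 * log m ^ 2 + 16) := by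
  calc ∑ y, p y ^ (1 - s) * log (p y) ^ 2
      ≤ ∑ y, m ^ (2 * s) * (4 * log m ^ 2 * p y + 16 / m) :=
        sum_le_sum fun y _ => rpow_one_sub_mul_log_sq_le (hp.1 y) (hp.le_one y) hs0 hs hm
    _ = m ^ (2 * s) * (4 * log m ^ 2 + Fintype.card Y * (16 / m)) := by
        rw [← mul_sum, sum_add_distrib, ← mul_sum, hp.2, sum_const, card_univ, nsmul_eq_mul,
          mul_one]
    _ ≤ m ^ (2 * s) * (4 * log m ^ 2 + 16) := by
        gcongr
        rw [← mul_div_assoc, div_le_iff₀ (by linarith)]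
        linarith

lemma IsDist.sum_rpow_one_sub_mul_log_sq_le_of_le_log_two_div (hp : IsDist p) {s m : ℝ}
    (hm : 3 ≤ m) (hcard : (Fintype.card Y : ℝ) ≤ m) (hs0 : 0 ≤ s)
    (hs : s ≤ log 2 / (18 * log m)) :
    ∑ y, p y ^ (1 - s) * log (p y) ^ 2 ≤ 18 * log m ^ 2 / log 2 := by
  have hL : 1 ≤ log m := one_le_log_three.trans (log_le_log (by norm_num) hm)
  have hlog2 : 0 < log 2 := log_pos one_lt_two
  have hlog2' : log 2 < 18 / 25 := log_two_lt_d9.trans (by norm_num)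
  have hsL : 2 * s * log m ≤ 1 / 9 := by
    rw [le_div_iff₀ (by positivity)] at hs
    nlinarith
  have hms : m ^ (2 * s) ≤ 9 / 8 := by
    -- `exp x ≤ 9 / 8` since `exp (-x) ≥ 1 - x ≥ 8 / 9`
    rw [rpow_def_of_pos (by linarith), mul_comm]
    have hinv : exp (2 * s * log m) * exp (-(2 * s * log m)) = 1 := by rw [← exp_add]; simp
    nlinarith [add_one_le_exp (-(2 * s * log m)), exp_pos (2 * s * log m)]
  calc ∑ y, p y ^ (1 - s) * log (p y) ^ 2 ≤ m ^ (2 * s) * (4 * log m ^ 2 + 16) :=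
        hp.sum_rpow_one_sub_mul_log_sq_le hs0 (by nlinarith) (by linarith) hcard
    _ ≤ 9 / 8 * (4 * log m ^ 2 + 16) := by gcongr
    _ ≤ 18 * log m ^ 2 / log 2 := by
        rw [le_div_iff₀ hlog2]
        nlinarith

end Letter

section Product

variable {X Y : Type*} [Fintype Y] {W : X → Y → ℝ} {n : ℕ}

lemma prodP_nonneg (hW : ∀ x, IsDist (W x)) (u : Fin n → X) (y : Fin n → Y) :
    0 ≤ prodP W u y :=
  prod_nonneg fun i _ => (hW (u i)).1 (y i)

lemma sum_prodP_rpow (hW : ∀ x, IsDist (W x)) (u : Fin n → X) (c : ℝ) :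
    ∑ y, prodP W u y ^ c = ∏ i, ∑ b, W (u i) b ^ c := by
  rw [prod_univ_sum, Fintype.piFinset_univ]
  exact sum_congr rfl fun y _ => (finsetProd_rpow _ _ (fun i _ => (hW (u i)).1 (y i)) c).symm

lemma isDist_prodP (hW : ∀ x, IsDist (W x)) (u : Fin n → X) : IsDist (prodP W u) := by
  refine ⟨prodP_nonneg hW u, ?_⟩
  simpa [(hW _).2] using sum_prodP_rpow hW u 1

lemma Hn_nonneg (hW : ∀ x, IsDist (W x)) (u : Fin n → X) : 0 ≤ Hn W u :=
  sum_nonneg fun i _ => (hW (u i)).H2_nonneg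

lemma Hn_le (hW : ∀ x, IsDist (W x)) (u : Fin n → X) :
    Hn W u ≤ n * logb 2 (Fintype.card Y) := by
  simpa [Hn] using sum_le_sum fun i (_ : i ∈ univ) => (hW (u i)).H2_le_logb_card

lemma sum_prodP_rpow_one_add_le (hW : ∀ x, IsDist (W x)) (u : Fin n → X) {t T : ℝ}
    (ht : |t| < 1) (hT : ∀ x, ∑ b, W x b ^ (1 - |t|) * log (W x b) ^ 2 ≤ T) :
    ∑ y, prodP W u y ^ (1 + t) ≤ exp (-(t * (log 2 * Hn W u)) + n * (t ^ 2 / 2 * T)) := by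
  calc ∑ y, prodP W u y ^ (1 + t)
      ≤ ∏ i, exp (-(t * (log 2 * H2 (W (u i)))) + t ^ 2 / 2 * T) := by
        rw [sum_prodP_rpow hW]
        exact prod_le_prod (fun i _ => sum_nonneg fun b _ => rpow_nonneg ((hW _).1 b) _)
          fun i _ => (hW (u i)).sum_rpow_one_add_le ht (hT _)
    _ = exp (-(t * (log 2 * Hn W u)) + n * (t ^ 2 / 2 * T)) := by
        rw [← exp_sum, sum_add_distrib, Hn, mul_sum, mul_sum, ← sum_neg_distrib]
        simp

end Product

lemma sum_min_le_one_sub_tvd {Z : Type*} [Fintype Z] {P Q : Z → ℝ} (hP : IsDist P)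
    (hQ : IsDist Q) (A : Finset Z) : ∑ z ∈ A, min (P z) (Q z) ≤ 1 - tvd P Q :=
  calc ∑ z ∈ A, min (P z) (Q z) ≤ ∑ z, min (P z) (Q z) :=
        sum_le_sum_of_subset_of_nonneg (subset_univ A) fun z _ _ => le_min (hP.1 z) (hQ.1 z)
    _ = ∑ z, (P z + Q z - |P z - Q z|) / 2 := sum_congr rfl fun z _ => by
        linarith [min_add_max (P z) (Q z), max_sub_min_eq_abs' (P z) (Q z)]
    _ = 1 - tvd P Q := by
        rw [← sum_div, sum_sub_distrib, sum_add_distrib, hP.2, hQ.2, tvd]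
        ring

section Typical

variable {X Y : Type*} [Fintype Y] {W : X → Y → ℝ} {n : ℕ} {δ : ℝ}

open scoped Classical

lemma prodP_le_rpow_of_mem_typSet {u : Fin n → X} {y : Fin n → Y} (hy : y ∈ typSet W u δ) :
    prodP W u y ≤ 2 ^ (δ * √n - Hn W u) := by
  simp only [typSet, mem_filter, mem_univ, true_and] at hy
  rw [← rpow_logb two_pos (by norm_num) hy.1]
  exact rpow_le_rpow_of_exponent_le one_le_two (by linarith [(abs_le.mp hy.2).2])

lemma rpow_le_prodP_of_mem_typSet {u : Fin n → X} {y : Fin n → Y} (hy : y ∈ typSet W u δ) :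
    2 ^ (-(δ * √n) - Hn W u) ≤ prodP W u y := by
  simp only [typSet, mem_filter, mem_univ, true_and] at hy
  rw [← rpow_logb two_pos (by norm_num) hy.1]
  exact rpow_le_rpow_of_exponent_le one_le_two (by linarith [(abs_le.mp hy.2).1])

-- Markov's inequality for `W_u ^ s` on the upper tail and for `W_u ^ (-s)` on the lower tail.
lemma prodP_le_of_notMem_typSet (hW : ∀ x, IsDist (W x)) {u : Fin n → X} {y : Fin n → Y}
    {s : ℝ} (hs : 0 ≤ s) (hy : y ∉ typSet W u δ) :
    prodP W u y ≤ exp (-(s * (log 2 * (δ * √n - Hn W u)))) * prodP W u y ^ (1 + s) +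
      exp (-(s * (log 2 * (δ * √n + Hn W u)))) * prodP W u y ^ (1 + -s) := by
  have hrhs : ∀ t c : ℝ, 0 ≤ exp c * prodP W u y ^ (1 + t) := fun t c => by
    have := prodP_nonneg hW u y
    positivity
  rcases (prodP_nonneg hW u y).eq_or_lt with h0 | hpos
  · exact h0.symm.trans_le (add_nonneg (hrhs _ _) (hrhs _ _))
  simp only [typSet, mem_filter, mem_univ, true_and, not_and, not_le] at hy
  rcases lt_abs.mp (hy hpos) with h | h
  · refine le_add_of_le_of_nonneg (le_exp_neg_mul_rpow_of_le_mul_log hpos ?_) (hrhs _ _)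
    rw [log_eq_log_two_mul_logb (prodP W u y)]
    gcongr
    linarith
  · refine le_add_of_nonneg_of_le (hrhs _ _) (le_exp_neg_mul_rpow_of_le_mul_log hpos ?_)
    rw [log_eq_log_two_mul_logb (prodP W u y), neg_mul, ← mul_neg, ← mul_neg]
    gcongr
    linarith

lemma sum_compl_typSet_le (hW : ∀ x, IsDist (W x)) (u : Fin n → X) {s T : ℝ} (hs0 : 0 ≤ s)
    (hs1 : s < 1) (hT : ∀ x, ∑ b, W x b ^ (1 - s) * log (W x b) ^ 2 ≤ T) :
    ∑ y ∈ (typSet W u δ)ᶜ, prodP W u y ≤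
      2 * exp (-(s * (log 2 * (δ * √n))) + n * (s ^ 2 / 2 * T)) := by
  have hs : |s| = s := abs_of_nonneg hs0
  have hupper := sum_prodP_rpow_one_add_le hW u (t := s) (by rwa [hs]) (by rwa [hs])
  have hlower := sum_prodP_rpow_one_add_le hW u (t := -s) (by rwa [abs_neg, hs])
    (by rwa [abs_neg, hs])
  calc ∑ y ∈ (typSet W u δ)ᶜ, prodP W u y
      ≤ ∑ y, (exp (-(s * (log 2 * (δ * √n - Hn W u)))) * prodP W u y ^ (1 + s) +
          exp (-(s * (log 2 * (δ * √n + Hn W u)))) * prodP W u y ^ (1 + -s)) := by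
        refine (sum_le_sum fun y hy => prodP_le_of_notMem_typSet hW hs0 (mem_compl.mp hy)).trans
          (sum_le_sum_of_subset_of_nonneg (subset_univ _) fun y _ _ => ?_)
        have := prodP_nonneg hW u y
        positivity
    _ = exp (-(s * (log 2 * (δ * √n - Hn W u)))) * ∑ y, prodP W u y ^ (1 + s) +
          exp (-(s * (log 2 * (δ * √n + Hn W u)))) * ∑ y, prodP W u y ^ (1 + -s) := by
        rw [sum_add_distrib, mul_sum, mul_sum]
    _ ≤ exp (-(s * (log 2 * (δ * √n - Hn W u)))) *
          exp (-(s * (log 2 * Hn W u)) + n * (s ^ 2 / 2 * T)) +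
        exp (-(s * (log 2 * (δ * √n + Hn W u)))) *
          exp (-(-s * (log 2 * Hn W u)) + n * ((-s) ^ 2 / 2 * T)) := by
        gcongr
    _ = 2 * exp (-(s * (log 2 * (δ * √n))) + n * (s ^ 2 / 2 * T)) := by
        rw [← exp_add, ← exp_add, two_mul]
        congr 2 <;> ring

lemma probOf_typSet_eq_one_sub (hW : ∀ x, IsDist (W x)) (u : Fin n → X) :
    probOf W u (typSet W u δ) = 1 - ∑ y ∈ (typSet W u δ)ᶜ, prodP W u y := by
  rw [probOf, ← (isDist_prodP hW u).2, ← sum_add_sum_compl (typSet W u δ)]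
  ring

lemma one_sub_two_mul_exp_le_probOf_typSet (hW : ∀ x, IsDist (W x)) (u : Fin n → X) {m : ℝ}
    (hm : 3 ≤ m) (hcard : (Fintype.card Y : ℝ) ≤ m) (hδ0 : 0 ≤ δ) (hn : 0 < √n)
    (hδ : δ * log 2 ≤ √n * log m) :
    1 - 2 * exp (-(log 2 ^ 3 * δ ^ 2 / (36 * log m ^ 2))) ≤ probOf W u (typSet W u δ) := by
  have hL : 1 ≤ log m := one_le_log_three.trans (log_le_log (by norm_num) hm)
  have hlog2 : 0 < log 2 := log_pos one_lt_two
  -- `T` bounds the second moments `∑ p ^ (1 - s) (log p) ^ 2`, and `s` minimises the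
  -- Chernoff exponent `-s log 2 δ √n + n s² T / 2`
  set T := 18 * log m ^ 2 / log 2
  set s := log 2 * δ / (√n * T)
  have hs0 : 0 ≤ s := by positivity
  have hsL : s ≤ log 2 / (18 * log m) := by
    rw [div_le_div_iff₀ (by positivity) (by positivity)]
    have : log 2 * (√n * T) = 18 * log m * (√n * log m) := by simp only [T]; field_simp
    nlinarith
  have hs1 : s < 1 := hsL.trans_lt <| by
    rw [div_lt_one (by positivity)]
    nlinarith [log_two_lt_d9]
  have hexp : -(s * (log 2 * (δ * √n))) + n * (s ^ 2 / 2 * T) =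
      -(log 2 ^ 3 * δ ^ 2 / (36 * log m ^ 2)) := by
    simp only [s, T]
    field_simp
    rw [sq_sqrt (Nat.cast_nonneg n)]
    ring
  rw [probOf_typSet_eq_one_sub hW, ← hexp]
  linarith [sum_compl_typSet_le hW u (δ := δ) hs0 hs1
    fun x => (hW x).sum_rpow_one_sub_mul_log_sq_le_of_le_log_two_div hm hcard hs0 hsL]

theorem one_sub_two_mul_rpow_le_probOf_typSet (hW : ∀ x, IsDist (W x)) (u : Fin n → X)
    (hδ0 : 0 < δ) (hδ : δ ≤ √n * logb 2 (Fintype.card Y)) :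
    1 - 2 * (2 : ℝ) ^ (-δ ^ 2 / (36 * Kf (Fintype.card Y))) ≤ probOf W u (typSet W u δ) := by
  set d := Fintype.card Y
  set m : ℝ := ((max d 3 : ℕ) : ℝ)
  have hm : 3 ≤ m := by simp only [m]; exact_mod_cast le_max_right d 3
  have hdm : (d : ℝ) ≤ m := by simp only [m]; exact_mod_cast le_max_left d 3
  have hlog2 : 0 < log 2 := log_pos one_lt_two
  have hn : 0 < √n := (sqrt_nonneg _).lt_of_ne fun h => by
    rw [← h, zero_mul] at hδ
    linarith
  have hlogd : log d ≤ log m := by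
    rcases (Nat.cast_nonneg d : (0 : ℝ) ≤ d).eq_or_lt with h | h
    · rw [← h, log_zero]
      exact log_nonneg (by linarith)
    · exact log_le_log h hdm
  have hδm : δ * log 2 ≤ √n * log m := by
    have := mul_le_mul_of_nonneg_right hδ hlog2.le
    rw [logb, mul_assoc, div_mul_cancel₀ _ hlog2.ne'] at this
    nlinarith
  have hKf : Kf d = (log m / log 2) ^ 2 := rfl
  convert one_sub_two_mul_exp_le_probOf_typSet hW u hm hdm hδ0.le hn hδm using 3
  rw [rpow_def_of_pos two_pos, hKf]
  congr 1
  field_simp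

lemma prodP_le_mul_min_of_mem_typSet (hW : ∀ x, IsDist (W x)) {u v : Fin n → X}
    {y : Fin n → Y} (hHn : Hn W v ≤ Hn W u + 1) (hu : y ∈ typSet W u δ)
    (hv : y ∈ typSet W v δ) :
    prodP W u y ≤ 2 ^ (1 + 2 * (δ * √n)) * min (prodP W u y) (prodP W v y) := by
  have hδ : 0 ≤ δ * √n := by
    simp only [typSet, mem_filter] at hu
    exact (abs_nonneg _).trans hu.2.2
  rw [mul_min_of_nonneg _ _ (by positivity)]
  refine le_min (le_mul_of_one_le_left (prodP_nonneg hW u y) (one_le_rpow one_le_two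
    (by positivity))) ?_
  calc prodP W u y ≤ 2 ^ (δ * √n - Hn W u) := prodP_le_rpow_of_mem_typSet hu
    _ = 2 ^ (1 + 2 * (δ * √n)) * 2 ^ (-(δ * √n) - (Hn W u + 1)) := by
        rw [← rpow_add two_pos]; ring_nf
    _ ≤ 2 ^ (1 + 2 * (δ * √n)) * 2 ^ (-(δ * √n) - Hn W v) := by
        gcongr
        linarith
    _ ≤ 2 ^ (1 + 2 * (δ * √n)) * prodP W v y := by
        gcongr
        exact rpow_le_prodP_of_mem_typSet hv

lemma probOf_typSet_le (hW : ∀ x, IsDist (W x)) {u v : Fin n → X}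
    (hHn : Hn W v ≤ Hn W u + 1) :
    probOf W u (typSet W v δ) ≤
      2 ^ (1 + 2 * (δ * √n)) * (1 - tvd (prodP W u) (prodP W v)) +
        (1 - probOf W u (typSet W u δ)) := by
  rw [probOf, ← sum_inter_add_sum_sdiff (typSet W v δ) (typSet W u δ), probOf_typSet_eq_one_sub hW,
    sub_sub_cancel]
  refine add_le_add ?_ (sum_le_sum_of_subset_of_nonneg
    (fun y hy => mem_compl.mpr (mem_sdiff.mp hy).2) fun y _ _ => prodP_nonneg hW u y)
  calc ∑ y ∈ typSet W v δ ∩ typSet W u δ, prodP W u y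
      ≤ ∑ y ∈ typSet W v δ ∩ typSet W u δ,
          2 ^ (1 + 2 * (δ * √n)) * min (prodP W u y) (prodP W v y) :=
        sum_le_sum fun y hy => prodP_le_mul_min_of_mem_typSet hW hHn
          (mem_inter.mp hy).2 (mem_inter.mp hy).1
    _ ≤ 2 ^ (1 + 2 * (δ * √n)) * (1 - tvd (prodP W u) (prodP W v)) := by
        rw [← mul_sum]
        gcongr
        exact sum_min_le_one_sub_tvd (isDist_prodP hW u) (isDist_prodP hW v) _

end Typical

lemma exists_card_div_le_card_and_le_add_one {ι : Type*} [Fintype ι] (f : ι → ℝ) (M : ℕ)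
    (hf : ∀ i, 0 ≤ f i ∧ f i ≤ M) :
    ∃ C : Finset ι, (Fintype.card ι : ℝ) / M ≤ C.card ∧ ∀ i ∈ C, ∀ j ∈ C, f j ≤ f i + 1 := by
  rcases M.eq_zero_or_pos with rfl | hM
  · exact ⟨∅, by simp, by simp⟩
  -- sort the values into the `M` unit bins `[c, c + 1]`, the last one also receiving `M`
  let bin : ι → ℕ := fun i => min ⌊f i⌋₊ (M - 1)
  have hbin : ∀ i, (bin i : ℝ) ≤ f i ∧ f i ≤ bin i + 1 := fun i => by
    refine ⟨(Nat.cast_le.mpr (min_le_left _ _)).trans (Nat.floor_le (hf i).1), ?_⟩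
    rcases le_total ⌊f i⌋₊ (M - 1) with h | h
    · simp only [bin, min_eq_left h]
      exact (Nat.lt_floor_add_one _).le
    · simp only [bin, min_eq_right h, Nat.cast_pred hM]
      linarith [(hf i).2]
  obtain ⟨c, -, hc⟩ := exists_le_card_fiber_of_nsmul_le_card_of_maps_to (s := univ)
    (t := range M) (f := bin) (b := (Fintype.card ι : ℝ) / M)
    (fun i _ => mem_range.mpr ((min_le_right _ _).trans_lt (by omega)))
    (nonempty_range_iff.mpr hM.ne')
    (by rw [card_range, nsmul_eq_mul, mul_div_cancel₀ _ (by positivity), card_univ])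
  refine ⟨_, hc, fun i hi j hj => ?_⟩
  simp only [mem_filter, mem_univ, true_and] at hi hj
  linarith [hbin i, hbin j, show (bin i : ℝ) = bin j by rw [hi, hj]]

end DIChannel

theorem stmt2_general {X Y : Type*} [Fintype Y] (W : X → Y → ℝ) (hW : ∀ x, IsDist (W x))
    (n : ℕ) (δ : ℝ) (hδ0 : 0 < δ)
    (hδ : δ ≤ Real.sqrt n * Real.logb 2 (Fintype.card Y))
    (N : ℕ) (u : Fin N → Fin n → X)
    (hsep : ∀ j k, j ≠ k →
      1 - tvd (prodP W (u j)) (prodP W (u k)) ≤ (2 : ℝ) ^ (-(3 * δ * Real.sqrt n))) :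
    ∃ C : Finset (Fin N),
      (N : ℝ) / (⌈(n : ℝ) * Real.logb 2 (Fintype.card Y)⌉₊ : ℝ) ≤ (C.card : ℝ) ∧
      (∀ j ∈ C,
        1 - 2 * (2 : ℝ) ^ (-δ ^ 2 / (36 * Kf (Fintype.card Y))) ≤
          probOf W (u j) (typSet W (u j) δ)) ∧
      (∀ j ∈ C, ∀ k ∈ C, j ≠ k →
        probOf W (u j) (typSet W (u k) δ) ≤
          2 * (2 : ℝ) ^ (-δ ^ 2 / (36 * Kf (Fintype.card Y))) +
            3 * (2 : ℝ) ^ (-(δ * Real.sqrt n))) := by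
  obtain ⟨C, hC, hwindow⟩ := exists_card_div_le_card_and_le_add_one (fun j => Hn W (u j))
    ⌈(n : ℝ) * logb 2 (Fintype.card Y)⌉₊
    fun j => ⟨Hn_nonneg hW (u j), (Hn_le hW (u j)).trans (Nat.le_ceil _)⟩
  have htyp := fun j => one_sub_two_mul_rpow_le_probOf_typSet hW (u j) hδ0 hδ
  refine ⟨C, by simpa using hC, fun j _ => htyp j, fun j hj k hk hjk => ?_⟩
  calc probOf W (u j) (typSet W (u k) δ)
      ≤ 2 ^ (1 + 2 * (δ * √n)) * (1 - tvd (prodP W (u j)) (prodP W (u k))) +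
          (1 - probOf W (u j) (typSet W (u j) δ)) := probOf_typSet_le hW (hwindow j hj k hk)
    _ ≤ 2 ^ (1 + 2 * (δ * √n)) * 2 ^ (-(3 * δ * √n)) +
          2 * 2 ^ (-δ ^ 2 / (36 * Kf (Fintype.card Y))) := by
        gcongr
        · exact hsep j k hjk
        · linarith [htyp j]
    _ = 2 * 2 ^ (-δ ^ 2 / (36 * Kf (Fintype.card Y))) + 2 * 2 ^ (-(δ * √n)) := by
        rw [← rpow_add two_pos, add_comm, show 1 + 2 * (δ * √n) + -(3 * δ * √n) = 1 + -(δ * √n)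
          by ring, rpow_add two_pos, rpow_one]
    _ ≤ 2 * 2 ^ (-δ ^ 2 / (36 * Kf (Fintype.card Y))) + 3 * 2 ^ (-(δ * √n)) := by
        gcongr
        norm_num

/-- Theorem (DI codes from packings, Theorem 5 of the paper): from `N` points whose output
distributions form a `2^{-3δ√n}`-packing in total variation one can extract a subset `𝒞` of
cardinality at least `N/⌈n log₂|𝒴|⌉` such that the typical sets yield an
`(n,|𝒞|,λ₁,λ₂)`-DI code. -/
theorem stmt2 {X Y : Type*} [Fintype Y] (W : X → Y → ℝ) (hW : ∀ x, IsDist (W x))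
    (n : ℕ) (hn : 1 ≤ n) (δ : ℝ) (hδ0 : 0 < δ)
    (hδ : δ ≤ Real.sqrt n * Real.logb 2 (Fintype.card Y))
    (N : ℕ) (u : Fin N → Fin n → X)
    (hsep : ∀ j k, j ≠ k →
      1 - tvd (prodP W (u j)) (prodP W (u k)) ≤ (2 : ℝ) ^ (-(3 * δ * Real.sqrt n))) :
    ∃ C : Finset (Fin N),
      (N : ℝ) / (⌈(n : ℝ) * Real.logb 2 (Fintype.card Y)⌉₊ : ℝ) ≤ (C.card : ℝ) ∧
      (∀ j ∈ C,
        1 - 2 * (2 : ℝ) ^ (-δ ^ 2 / (36 * Kf (Fintype.card Y))) ≤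
          probOf W (u j) (typSet W (u j) δ)) ∧
      (∀ j ∈ C, ∀ k ∈ C, j ≠ k →
        probOf W (u j) (typSet W (u k) δ) ≤
          2 * (2 : ℝ) ^ (-δ ^ 2 / (36 * Kf (Fintype.card Y))) +
            3 * (2 : ℝ) ^ (-(δ * Real.sqrt n))) :=
  stmt2_general W hW n δ hδ0 hδ N u hsep
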